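/- For every t ∈ ℝ with t ≠ 2 and t ≠ −2, and every R > 0, there exist θ, θ′ ∈ M′ such that θ′ − θ = t·e₃ and ‖θ‖ > R, ‖θ′‖ > R; that is, in the relation θ′ − θ = ξ with |θ| → ∞ one may replace M by M′ for ξ = t·e₃ with t ≠ ±2. -/

import Mathlib

open Complex

/-- The bilinear "dot product" on `ℂ³` without complex conjugation. -/
noncomputable def cdot (θ w : EuclideanSpace ℂ (Fin 3)) : ℂ :=
  θ 0 * w 0 + θ 1 * w 1 + θ 2 * w 2

/-- The algebraic variety `M = {θ ∈ ℂ³ : θ·θ = 1}`. -/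
noncomputable def M : Set (EuclideanSpace ℂ (Fin 3)) := {θ | cdot θ θ = 1}

/-- The subset `M′ = {(sin ϑ cos φ, sin ϑ sin φ, cos ϑ) : ϑ, φ ∈ ℂ}`. -/
noncomputable def M' : Set (EuclideanSpace ℂ (Fin 3)) :=
  {θ | ∃ ϑ φ : ℂ,
    θ = (WithLp.toLp 2 ![Complex.sin ϑ * Complex.cos φ, Complex.sin ϑ * Complex.sin φ,
      Complex.cos ϑ] : EuclideanSpace ℂ (Fin 3))}

/-!
The reflection `ϑ ↦ π - ϑ` fixes `sin ϑ` and negates `cos ϑ`, so the spherical points with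
parameters `(π - ϑ, φ)` and `(ϑ, φ)` differ by `-2 cos ϑ · e₃`. Since the complex cosine is
surjective we can take `cos ϑ = -t/2`, and then `sin ϑ ≠ 0` precisely because `t ≠ ±2`.
Surjectivity of the cosine once more gives `φ` with `sin ϑ cos φ = R + 1`, a coordinate shared
by both points, so both have norm larger than `R`.
-/

noncomputable def sphericalPoint (ϑ φ : ℂ) : EuclideanSpace ℂ (Fin 3) :=
  WithLp.toLp 2 ![sin ϑ * cos φ, sin ϑ * sin φ, cos ϑ]

lemma sphericalPoint_mem_M' (ϑ φ : ℂ) : sphericalPoint ϑ φ ∈ M' := ⟨ϑ, φ, rfl⟩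

lemma sphericalPoint_pi_sub_sub (ϑ φ : ℂ) :
    sphericalPoint (Real.pi - ϑ) φ - sphericalPoint ϑ φ =
      WithLp.toLp 2 (fun i => -2 * cos ϑ * (![0, 0, 1] : Fin 3 → ℂ) i) := by
  ext i
  fin_cases i <;> simp [sphericalPoint, sin_pi_sub, cos_pi_sub]
  ring

lemma norm_sin_mul_cos_le_norm_sphericalPoint (ϑ φ : ℂ) :
    ‖sin ϑ * cos φ‖ ≤ ‖sphericalPoint ϑ φ‖ :=
  PiLp.norm_apply_le (sphericalPoint ϑ φ) 0

lemma sin_ne_zero_of_cos_eq {t : ℂ} (ht2 : t ≠ 2) (ht2' : t ≠ -2) {ϑ : ℂ}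
    (hϑ : cos ϑ = -t / 2) : sin ϑ ≠ 0 := by
  rw [Ne, sin_eq_zero_iff_cos_eq, hϑ]
  rintro (h | h)
  · exact ht2' (by linear_combination -2 * h)
  · exact ht2 (by linear_combination -2 * h)

theorem exists_large_theta_pair_in_Mprime_general (t : ℝ) (ht2 : t ≠ 2) (ht2' : t ≠ -2)
    (R : ℝ) :
    ∃ θ ∈ M', ∃ θ' ∈ M',
      θ' - θ = (WithLp.toLp 2 (fun i => (t : ℂ) * (![0, 0, 1] : Fin 3 → ℂ) i) :
        EuclideanSpace ℂ (Fin 3)) ∧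
      ‖θ‖ > R ∧ ‖θ'‖ > R := by
  obtain ⟨ϑ, hϑ⟩ := cos_surjective (-(t : ℂ) / 2)
  have hsin : sin ϑ ≠ 0 :=
    sin_ne_zero_of_cos_eq (mod_cast ht2) (mod_cast ht2') hϑ
  obtain ⟨φ, hφ⟩ := cos_surjective (((R + 1 : ℝ) : ℂ) / sin ϑ)
  have hlarge : R < ‖sin ϑ * cos φ‖ := by
    rw [hφ, mul_div_cancel₀ _ hsin, norm_real, Real.norm_eq_abs]
    exact (lt_add_one R).trans_le (le_abs_self _)
  refine ⟨_, sphericalPoint_mem_M' ϑ φ, _, sphericalPoint_mem_M' (Real.pi - ϑ) φ, ?_, ?_, ?_⟩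
  · rw [sphericalPoint_pi_sub_sub, hϑ]
    congr! 3
    ring
  · exact hlarge.trans_le (norm_sin_mul_cos_le_norm_sphericalPoint ϑ φ)
  · have h := norm_sin_mul_cos_le_norm_sphericalPoint (Real.pi - ϑ) φ
    rw [sin_pi_sub] at h
    exact hlarge.trans_le h

/-- For every real `t ≠ ±2` and every `R > 0` there exist `θ, θ′ ∈ M′` with
`θ′ − θ = t·e₃`, `‖θ‖ > R` and `‖θ′‖ > R`: in the relation `θ′ − θ = ξ`,
`|θ| → ∞`, one may replace `M` by `M′` for `ξ = t·e₃`, `t ≠ ±2`. -/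
theorem exists_large_theta_pair_in_Mprime (t : ℝ) (ht2 : t ≠ 2) (ht2' : t ≠ -2)
    (R : ℝ) (hR : R > 0) :
    ∃ θ ∈ M', ∃ θ' ∈ M',
      θ' - θ = (WithLp.toLp 2 (fun i => (t : ℂ) * (![0, 0, 1] : Fin 3 → ℂ) i) :
        EuclideanSpace ℂ (Fin 3)) ∧
      ‖θ‖ > R ∧ ‖θ'‖ > R :=
  exists_large_theta_pair_in_Mprime_general t ht2 ht2' R
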